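/- arXiv:1210.8114 — 4 statements merged into one kernel-verified Lean document; each statement's English description precedes it below -/
import Mathlib

section
/- (Invertibility Lemma) Let F be a field, a₁,…,a_m ∈ Mₙ(F) such that the linear span of {a₁,…,a_m} contains an invertible matrix, and let S be a finite nonempty subset of F. If α₁,…,α_m are chosen uniformly and independently from S, then the probability that α₁a₁ + ⋯ + α_m a_m is invertible is at least 1 − n/|S|. -/
/-!
Substituting indeterminates for the coefficients, `det (∑ₖ Xₖ aₖ)` is a homogeneous polynomial of
degree `n` in `m` variables whose value at `α` is `det (∑ₖ αₖ aₖ)`. It is nonzero because it does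
not vanish at the coefficients of the invertible matrix in the span, so by Schwartz–Zippel it
vanishes on at most a fraction `n / |S|` of the points of `S ^ m`.
-/

open scoped Classical

open Finset MvPolynomial

namespace Matrix

variable {ι n R : Type*} [Fintype ι] [Fintype n] [DecidableEq n] [CommRing R]

lemma isHomogeneous_det_of_isHomogeneous_one {σ : Type*} {M : Matrix n n (MvPolynomial σ R)}
    (hM : ∀ i j, (M i j).IsHomogeneous 1) : M.det.IsHomogeneous (Fintype.card n) := by
  rw [det_apply]
  refine IsHomogeneous.sum _ _ _ fun τ _ => ?_
  have hprod : (∏ i, M (τ i) i).IsHomogeneous (Fintype.card n) := by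
    have := IsHomogeneous.prod univ _ (fun _ => 1) fun i _ => hM (τ i) i
    rwa [sum_const, card_univ, smul_eq_mul, mul_one] at this
  rw [Units.smul_def]
  exact (homogeneousSubmodule _ R _).toAddSubgroup.zsmul_mem hprod _

noncomputable def genericCombination (a : ι → Matrix n n R) : Matrix n n (MvPolynomial ι R) :=
  of fun i j => ∑ k, X k * C (a k i j)

lemma eval_det_genericCombination (a : ι → Matrix n n R) (α : ι → R) :
    eval α (genericCombination a).det = (∑ k, α k • a k).det := by
  rw [RingHom.map_det]
  congr 1
  ext i j
  simp [genericCombination, sum_apply]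

lemma totalDegree_det_genericCombination_le (a : ι → Matrix n n R) :
    (genericCombination a).det.totalDegree ≤ Fintype.card n :=
  IsHomogeneous.totalDegree_le <| isHomogeneous_det_of_isHomogeneous_one fun _ _ =>
    IsHomogeneous.sum _ _ _ fun k _ => (isHomogeneous_X R k).mul (isHomogeneous_C _ _)

lemma det_genericCombination_ne_zero [Nontrivial R] {a : ι → Matrix n n R}
    (h : ∃ A ∈ Submodule.span R (Set.range a), IsUnit A) : (genericCombination a).det ≠ 0 := by
  obtain ⟨A, hA, hunit⟩ := h
  obtain ⟨c, rfl⟩ := (Submodule.mem_span_range_iff_exists_fun R).mp hA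
  intro h0
  have := eval_det_genericCombination a c
  rw [h0, map_zero] at this
  exact ((isUnit_iff_isUnit_det _).mp hunit).ne_zero this.symm

end Matrix

namespace MvPolynomial

variable {R : Type*} [CommRing R] [IsDomain R]

lemma one_sub_div_le_card_filter_eval_ne_zero {m : ℕ} {p : MvPolynomial (Fin m) R} (hp : p ≠ 0)
    {S : Finset R} (hS : S.Nonempty) :
    1 - (p.totalDegree : ℝ) / #S ≤
      #{f ∈ Fintype.piFinset fun _ : Fin m ↦ S | eval f p ≠ 0} /
        (#(Fintype.piFinset fun _ : Fin m ↦ S) : ℝ) := by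
  have hzippel := schwartz_zippel_totalDegree hp S
  rw [← NNRat.cast_le (K := ℝ)] at hzippel
  push_cast at hzippel
  have hN : (0 : ℝ) < #S ^ m := by exact_mod_cast pow_pos hS.card_pos m
  have hsplit : (#{f ∈ Fintype.piFinset fun _ : Fin m ↦ S | eval f p = 0} : ℝ) +
      #{f ∈ Fintype.piFinset fun _ : Fin m ↦ S | eval f p ≠ 0} = #S ^ m := by
    exact_mod_cast Fintype.card_piFinset_const S m ▸ card_filter_add_card_filter_not _
  rw [div_le_iff₀ hN] at hzippel
  rw [Fintype.card_piFinset_const, Nat.cast_pow, le_div_iff₀ hN]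
  linarith

end MvPolynomial

theorem invertibility_lemma_general (F : Type*) [Field F] (m n : ℕ)
    (a : Fin m → Matrix (Fin n) (Fin n) F)
    (hinv : ∃ A ∈ Submodule.span F (Set.range a), IsUnit A)
    (S : Finset F) (hS : S.Nonempty) :
    (1 : ℝ) - (n : ℝ) / (S.card : ℝ) ≤
      ((Fintype.piFinset fun _ : Fin m => S).filter
          (fun α : Fin m → F => IsUnit (∑ i, α i • a i))).card /
        ((Fintype.piFinset fun _ : Fin m => S).card : ℝ) := by
  have hunit_iff (α : Fin m → F) :
      IsUnit (∑ i, α i • a i) ↔ eval α (Matrix.genericCombination a).det ≠ 0 := by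
    rw [Matrix.eval_det_genericCombination, Matrix.isUnit_iff_isUnit_det, isUnit_iff_ne_zero]
  simp_rw [hunit_iff]
  refine le_trans ?_ (one_sub_div_le_card_filter_eval_ne_zero
    (Matrix.det_genericCombination_ne_zero hinv) hS)
  have hdeg := Matrix.totalDegree_det_genericCombination_le a
  rw [Fintype.card_fin] at hdeg
  gcongr

theorem invertibility_lemma (F : Type*) [Field F] [DecidableEq F] (m n : ℕ)
    (a : Fin m → Matrix (Fin n) (Fin n) F)
    (hinv : ∃ A ∈ Submodule.span F (Set.range a), IsUnit A)
    (S : Finset F) (hS : S.Nonempty) :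
    (1 : ℝ) - (n : ℝ) / (S.card : ℝ) ≤
      ((Fintype.piFinset fun _ : Fin m => S).filter
          (fun α : Fin m → F => IsUnit (∑ i, α i • a i))).card /
        ((Fintype.piFinset fun _ : Fin m => S).card : ℝ) :=
  invertibility_lemma_general F m n a hinv S hS
end

section
/- Correctness of the linear centralizer attack on the Commutator KEP: Let F be a field, G ≤ GLₙ(F), a₁,…,a_k, b₁,…,b_k ∈ G, a ∈ ⟨a₁,…,a_k⟩ and b ∈ ⟨b₁,…,b_k⟩. Suppose x, y ∈ GLₙ(F) satisfy: (i) bᵢ x = x (a⁻¹ bᵢ a) for all i; (ii) aᵢ y = y (b⁻¹ aᵢ b) for all i; and (iii) y lies in the double centralizer C(C(b₁,…,b_k)) taken in Mₙ(F). Then x⁻¹y⁻¹xy = a⁻¹b⁻¹ab. -/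
theorem commutator_kep_attack_correct (F : Type*) [Field F] (n k : ℕ)
    (G : Subgroup (GL (Fin n) F))
    (a b : Fin k → GL (Fin n) F)
    (haG : ∀ i, a i ∈ G) (hbG : ∀ i, b i ∈ G)
    (A B : GL (Fin n) F)
    (hA : A ∈ Subgroup.closure (Set.range a))
    (hB : B ∈ Subgroup.closure (Set.range b))
    (x y : GL (Fin n) F)
    (hx : ∀ i, b i * x = x * (A⁻¹ * b i * A))
    (hy : ∀ i, a i * y = y * (B⁻¹ * a i * B))
    (hyc : (y : Matrix (Fin n) (Fin n) F) ∈
      Set.centralizer (Set.centralizer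
        (Set.range fun i => (b i : Matrix (Fin n) (Fin n) F)))) :
    x⁻¹ * y⁻¹ * x * y = A⁻¹ * B⁻¹ * A * B := by
  set c := x * A⁻¹ with hc
  set d := y * B⁻¹ with hd
  have hcb : ∀ i, Commute c (b i) := by
    intro i
    have : b i * c = c * b i := by
      rw [hc, ← mul_assoc, hx i]; group
    exact this.symm
  have hda : ∀ i, Commute d (a i) := by
    intro i
    have : a i * d = d * a i := by
      rw [hd, ← mul_assoc, hy i]; group
    exact this.symm
  have hcB : Commute c B := by
    refine Subgroup.closure_induction ?_ (Commute.one_right c)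
      (fun g h _ _ hg hh => hg.mul_right hh) (fun g _ hg => hg.inv_right) hB
    rintro g ⟨i, rfl⟩; exact hcb i
  have hdA : Commute d A := by
    refine Subgroup.closure_induction ?_ (Commute.one_right d)
      (fun g h _ _ hg hh => hg.mul_right hh) (fun g _ hg => hg.inv_right) hA
    rintro g ⟨i, rfl⟩; exact hda i
  have hcmem : (c : Matrix (Fin n) (Fin n) F) ∈
      Set.centralizer (Set.range fun i => (b i : Matrix (Fin n) (Fin n) F)) := by
    rintro m ⟨i, rfl⟩
    have := (hcb i).eq
    have h2 : ((c * b i : GL (Fin n) F) : Matrix (Fin n) (Fin n) F)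
        = ((b i * c : GL (Fin n) F) : Matrix (Fin n) (Fin n) F) := by rw [this]
    simpa [Units.val_mul] using h2.symm
  have hcy : Commute c y := by
    have := hyc _ hcmem
    exact Units.ext (by simpa [Units.val_mul] using this)
  have hcd : Commute c d := hcy.mul_right hcB.inv_right
  have hxE : x = c * A := by rw [hc, inv_mul_cancel_right]
  have hyE : y = d * B := by rw [hd, inv_mul_cancel_right]
  rw [hxE, hyE]
  calc (c * A)⁻¹ * (d * B)⁻¹ * (c * A) * (d * B)
      = A⁻¹ * (c⁻¹ * B⁻¹) * (d⁻¹ * c) * (A * (d * B)) := by group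
    _ = A⁻¹ * (B⁻¹ * c⁻¹) * (c * d⁻¹) * (A * (d * B)) := by
        rw [hcB.inv_inv.eq, (hcd.inv_right.symm).eq]
    _ = A⁻¹ * B⁻¹ * (d⁻¹ * A) * (d * B) := by group
    _ = A⁻¹ * B⁻¹ * (A * d⁻¹) * (d * B) := by rw [hdA.inv_left.eq]
    _ = A⁻¹ * B⁻¹ * A * B := by group
end

section
/- Correctness of the linear centralizer attack on the Centralizer KEP: Let F be a field, G ≤ GLₙ(F), g, a₁, b₂ ∈ G, g₁,…,g_k elements of G commuting with a₁, h₁,…,h_k elements of G commuting with b₂, a₂ ∈ ⟨{h₁,…,h_k} ∪ Z(G)⟩ and b₁ ∈ ⟨{g₁,…,g_k} ∪ Z(G)⟩. Suppose x ∈ C(g₁,…,g_k) and y ∈ C(C(h₁,…,h_k)) (centralizers in Mₙ(F)), y is invertible, and x·g = (a₁ g a₂)·y. Then x·(b₁ g b₂)·y⁻¹ = a₁ b₁ g a₂ b₂. -/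
theorem centralizer_kep_attack_correct (F : Type*) [Field F] (n k : ℕ)
    (G : Subgroup (GL (Fin n) F))
    (g a₁ b₂ : GL (Fin n) F)
    (hgG : g ∈ G) (ha₁G : a₁ ∈ G) (hb₂G : b₂ ∈ G)
    (gs hs : Fin k → GL (Fin n) F)
    (hgsG : ∀ i, gs i ∈ G) (hhsG : ∀ i, hs i ∈ G)
    (hgs : ∀ i, gs i * a₁ = a₁ * gs i)
    (hhs : ∀ i, hs i * b₂ = b₂ * hs i)
    (a₂ b₁ : GL (Fin n) F)
    (ha₂ : a₂ ∈ Subgroup.closure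
      (Set.range hs ∪ {z : GL (Fin n) F | z ∈ G ∧ ∀ h ∈ G, z * h = h * z}))
    (hb₁ : b₁ ∈ Subgroup.closure
      (Set.range gs ∪ {z : GL (Fin n) F | z ∈ G ∧ ∀ h ∈ G, z * h = h * z}))
    (x y : Matrix (Fin n) (Fin n) F)
    (hx : x ∈ Set.centralizer (Set.range fun i => (gs i : Matrix (Fin n) (Fin n) F)))
    (hy : y ∈ Set.centralizer (Set.centralizer
      (Set.range fun i => (hs i : Matrix (Fin n) (Fin n) F))))
    (hyu : IsUnit y)
    (heq : x * (g : Matrix (Fin n) (Fin n) F) =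
      ((a₁ * g * a₂ : GL (Fin n) F) : Matrix (Fin n) (Fin n) F) * y) :
    x * ((b₁ * g * b₂ : GL (Fin n) F) : Matrix (Fin n) (Fin n) F) * y⁻¹ =
      ((a₁ * b₁ * g * a₂ * b₂ : GL (Fin n) F) : Matrix (Fin n) (Fin n) F) := by
  have detu : IsUnit y.det := (Matrix.isUnit_iff_isUnit_det y).mp hyu
  have hyy : y * y⁻¹ = 1 := Matrix.mul_nonsing_inv y detu
  -- a₂ ∈ G
  have hSsub : (Set.range hs ∪ {z : GL (Fin n) F | z ∈ G ∧ ∀ h ∈ G, z * h = h * z})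
      ⊆ (G : Set (GL (Fin n) F)) := by
    rintro z (⟨i, rfl⟩ | hz)
    · exact hhsG i
    · exact hz.1
  have ha₂G : a₂ ∈ G := (Subgroup.closure_le G).2 hSsub ha₂
  -- y commutes with central elements of G
  have hyz : ∀ z : GL (Fin n) F, z ∈ G → (∀ h ∈ G, z * h = h * z) →
      y * (z : Matrix (Fin n) (Fin n) F) = (z : Matrix (Fin n) (Fin n) F) * y := by
    intro z hzG hzc
    have hmem : (z : Matrix (Fin n) (Fin n) F) ∈ Set.centralizer
        (Set.range fun i => (hs i : Matrix (Fin n) (Fin n) F)) := by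
      rintro m ⟨i, rfl⟩
      have h1 := congrArg Units.val (hzc (hs i) (hhsG i)).symm
      simpa [Units.val_mul] using h1
    exact (hy _ hmem).symm
  -- y commutes with b₂
  have hyb₂ : y * (b₂ : Matrix (Fin n) (Fin n) F) = (b₂ : Matrix (Fin n) (Fin n) F) * y := by
    have hmem : (b₂ : Matrix (Fin n) (Fin n) F) ∈ Set.centralizer
        (Set.range fun i => (hs i : Matrix (Fin n) (Fin n) F)) := by
      rintro m ⟨i, rfl⟩
      have h1 := congrArg Units.val (hhs i)
      simpa [Units.val_mul] using h1
    exact (hy _ hmem).symm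
  -- heq in right-associated form
  have heq' : x * (g : Matrix (Fin n) (Fin n) F) =
      (a₁ : Matrix (Fin n) (Fin n) F) * ((g : Matrix (Fin n) (Fin n) F) *
        ((a₂ : Matrix (Fin n) (Fin n) F) * y)) := by
    simpa [Units.val_mul, mul_assoc] using heq
  -- cancel g on the right
  have hgcancel : ∀ A B : Matrix (Fin n) (Fin n) F,
      A * (g : Matrix (Fin n) (Fin n) F) = B * (g : Matrix (Fin n) (Fin n) F) → A = B := by
    intro A B hAB
    have h1 : (g : Matrix (Fin n) (Fin n) F) * ((g⁻¹ : GL (Fin n) F) : Matrix (Fin n) (Fin n) F)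
        = 1 := by
      rw [← Units.val_mul, mul_inv_cancel]; rfl
    calc A = A * ((g : Matrix (Fin n) (Fin n) F) * ((g⁻¹ : GL (Fin n) F) : _)) := by
            rw [h1, mul_one]
      _ = B * ((g : Matrix (Fin n) (Fin n) F) * ((g⁻¹ : GL (Fin n) F) : _)) := by
            rw [← mul_assoc, hAB, mul_assoc]
      _ = B := by rw [h1, mul_one]
  -- x commutes with central elements of G
  have hxz : ∀ z : GL (Fin n) F, z ∈ G → (∀ h ∈ G, z * h = h * z) →
      Commute x (z : Matrix (Fin n) (Fin n) F) := by
    intro z hzG hzc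
    have hzg : (z : Matrix (Fin n) (Fin n) F) * (g : Matrix (Fin n) (Fin n) F)
        = (g : Matrix (Fin n) (Fin n) F) * z := by
      have := congrArg Units.val (hzc g hgG)
      simpa [Units.val_mul] using this
    have hza₁ : (z : Matrix (Fin n) (Fin n) F) * (a₁ : Matrix (Fin n) (Fin n) F)
        = (a₁ : Matrix (Fin n) (Fin n) F) * z := by
      have := congrArg Units.val (hzc a₁ ha₁G)
      simpa [Units.val_mul] using this
    have hza₂ : (z : Matrix (Fin n) (Fin n) F) * (a₂ : Matrix (Fin n) (Fin n) F)
        = (a₂ : Matrix (Fin n) (Fin n) F) * z := by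
      have := congrArg Units.val (hzc a₂ ha₂G)
      simpa [Units.val_mul] using this
    have key : (x * (z : Matrix (Fin n) (Fin n) F)) * (g : Matrix (Fin n) (Fin n) F)
        = ((z : Matrix (Fin n) (Fin n) F) * x) * (g : Matrix (Fin n) (Fin n) F) := by
      calc (x * (z : Matrix (Fin n) (Fin n) F)) * (g : Matrix (Fin n) (Fin n) F)
          = x * ((z : Matrix (Fin n) (Fin n) F) * (g : Matrix (Fin n) (Fin n) F)) := by
            rw [mul_assoc]
        _ = (x * (g : Matrix (Fin n) (Fin n) F)) * z := by rw [hzg, ← mul_assoc]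
        _ = (a₁ : Matrix (Fin n) (Fin n) F) * ((g : Matrix (Fin n) (Fin n) F) *
              ((a₂ : Matrix (Fin n) (Fin n) F) * y)) * z := by rw [heq']
        _ = (a₁ : Matrix (Fin n) (Fin n) F) * ((g : Matrix (Fin n) (Fin n) F) *
              ((a₂ : Matrix (Fin n) (Fin n) F) * ((z : Matrix (Fin n) (Fin n) F) * y))) := by
            rw [← hyz z hzG hzc]; noncomm_ring
        _ = (z : Matrix (Fin n) (Fin n) F) * ((a₁ : Matrix (Fin n) (Fin n) F) *
              ((g : Matrix (Fin n) (Fin n) F) * ((a₂ : Matrix (Fin n) (Fin n) F) * y))) := by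
            rw [← mul_assoc (a₂ : Matrix (Fin n) (Fin n) F) (z : Matrix (Fin n) (Fin n) F) y,
              ← hza₂, mul_assoc (z : Matrix (Fin n) (Fin n) F) (a₂ : Matrix (Fin n) (Fin n) F) y,
              ← mul_assoc (g : Matrix (Fin n) (Fin n) F) (z : Matrix (Fin n) (Fin n) F),
              ← hzg, mul_assoc (z : Matrix (Fin n) (Fin n) F) (g : Matrix (Fin n) (Fin n) F),
              ← mul_assoc (a₁ : Matrix (Fin n) (Fin n) F) (z : Matrix (Fin n) (Fin n) F),
              ← hza₁, mul_assoc]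
        _ = ((z : Matrix (Fin n) (Fin n) F) * x) * (g : Matrix (Fin n) (Fin n) F) := by
            rw [← heq', mul_assoc]
    exact hgcancel _ _ key
  -- x commutes with b₁
  have hxb₁ : Commute x (b₁ : Matrix (Fin n) (Fin n) F) := by
    refine Subgroup.closure_induction
      (p := fun (b : GL (Fin n) F) _ => Commute x (b : Matrix (Fin n) (Fin n) F)) ?_ ?_ ?_ ?_ hb₁
    · rintro b (⟨i, rfl⟩ | hb)
      · exact (hx _ ⟨i, rfl⟩).symm
      · exact hxz b hb.1 hb.2
    · simpa using Commute.one_right x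
    · intro b c _ _ h1 h2
      have : ((b * c : GL (Fin n) F) : Matrix (Fin n) (Fin n) F) =
        (b : Matrix (Fin n) (Fin n) F) * c := rfl
      rw [Commute, this]
      exact h1.mul_right h2
    · intro b _ h1
      exact h1.units_inv_right
  -- a₁ commutes with b₁ (in GL)
  have hab : b₁ * a₁ = a₁ * b₁ := by
    refine Subgroup.closure_induction
      (p := fun (b : GL (Fin n) F) _ => b * a₁ = a₁ * b) ?_ ?_ ?_ ?_ hb₁
    · rintro b (⟨i, rfl⟩ | hb)
      · exact hgs i
      · exact hb.2 a₁ ha₁G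
    · simp
    · intro b c _ _ h1 h2
      rw [mul_assoc, h2, ← mul_assoc, h1, mul_assoc]
    · intro b _ h1
      have h1' : Commute b a₁ := h1
      exact h1'.inv_left.eq
  have hab' : (b₁ : Matrix (Fin n) (Fin n) F) * (a₁ : Matrix (Fin n) (Fin n) F)
      = (a₁ : Matrix (Fin n) (Fin n) F) * b₁ := by
    have := congrArg Units.val hab
    simpa [Units.val_mul] using this
  -- final computation
  simp only [Units.val_mul, mul_assoc]
  rw [← mul_assoc x (b₁ : Matrix (Fin n) (Fin n) F), hxb₁.eq,
    mul_assoc (b₁ : Matrix (Fin n) (Fin n) F) x,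
    ← mul_assoc x (g : Matrix (Fin n) (Fin n) F), heq']
  simp only [mul_assoc]
  rw [← mul_assoc y (b₂ : Matrix (Fin n) (Fin n) F), hyb₂]
  simp only [mul_assoc]
  rw [hyy, mul_one, ← mul_assoc (b₁ : Matrix (Fin n) (Fin n) F)
    (a₁ : Matrix (Fin n) (Fin n) F), hab']
  simp only [mul_assoc]
end

section
/- Correctness of the attack on the Double Coset KEP: Let G be a group, A₁, A₂, B₁, B₂ ≤ G with [A₁,B₁] = [A₂,B₂] = 1, g ∈ G, a₁ ∈ A₁, a₂ ∈ A₂, b₁ ∈ B₁, b₂ ∈ B₂. Suppose ã₁, ã₂ ∈ G satisfy ã₁ g ã₂ = a₁ g a₂, ã₁ commutes with every element of B₁, and ã₂ commutes with every element of B₂. Then ã₁ (b₁ g b₂) ã₂ = a₁ b₁ g a₂ b₂. -/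
theorem double_coset_attack_correct {G : Type*} [Group G]
    (A₁ A₂ B₁ B₂ : Subgroup G)
    (h1 : ∀ a ∈ A₁, ∀ b ∈ B₁, a * b = b * a)
    (h2 : ∀ a ∈ A₂, ∀ b ∈ B₂, a * b = b * a)
    (g : G) (a₁ : G) (ha₁ : a₁ ∈ A₁) (a₂ : G) (ha₂ : a₂ ∈ A₂)
    (b₁ : G) (hb₁ : b₁ ∈ B₁) (b₂ : G) (hb₂ : b₂ ∈ B₂)
    (atil₁ atil₂ : G)
    (heq : atil₁ * g * atil₂ = a₁ * g * a₂)
    (hc₁ : ∀ b ∈ B₁, atil₁ * b = b * atil₁)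
    (hc₂ : ∀ b ∈ B₂, atil₂ * b = b * atil₂) :
    atil₁ * (b₁ * g * b₂) * atil₂ = a₁ * b₁ * g * a₂ * b₂ := by
  have e1 := hc₁ b₁ hb₁
  have e2 := hc₂ b₂ hb₂
  have e3 := h1 a₁ ha₁ b₁ hb₁
  calc atil₁ * (b₁ * g * b₂) * atil₂
      = b₁ * (atil₁ * g * atil₂) * b₂ := by
        rw [show atil₁ * (b₁ * g * b₂) * atil₂ = (atil₁ * b₁) * g * (b₂ * atil₂) by group,
          e1, ← e2]; group
    _ = b₁ * (a₁ * g * a₂) * b₂ := by rw [heq]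
    _ = a₁ * b₁ * g * a₂ * b₂ := by
        rw [show b₁ * (a₁ * g * a₂) * b₂ = (b₁ * a₁) * g * a₂ * b₂ by group, ← e3]
end
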